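/- Let E be a separable complex Hilbert space and suppose Φ, Φ₁, Ψ, Ψ₁ ∈ L∞_{B(E)}(𝕋) satisfy T_Φ + H_Ψ = T_{Φ₁} + H_{Ψ₁} as operators on H²_E(𝕋). Then Φ = Φ₁ almost everywhere on 𝕋, and Ψ − Ψ₁ ∈ conj(z H∞_{B(E)}(𝔻)), i.e. all Fourier coefficients of Ψ − Ψ₁ of nonnegative index vanish. -/

import Mathlib

open MeasureTheory Complex AddCircle
open scoped ENNReal Real

set_option synthInstance.maxHeartbeats 1000000
set_option linter.unusedSectionVars false

noncomputable section

namespace PaperTHV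

instance fact2pi : Fact (0 < 2 * Real.pi) := ⟨by positivity⟩

/-- The circle, as `ℝ / 2πℤ`. -/
abbrev 𝕋c := AddCircle (2 * Real.pi)

/-- The normalized Lebesgue (Haar) measure on the circle. -/
abbrev μc : Measure 𝕋c := haarAddCircle

/-- The `n`-th Fourier coefficient of a vector-valued function on the circle
(a universe-polymorphic version of `fourierCoeff`). -/
def vFourierCoeff {F : Type*} [NormedAddCommGroup F] [NormedSpace ℂ F]
    (f : 𝕋c → F) (n : ℤ) : F :=
  ∫ t : 𝕋c, fourier (-n) t • f t ∂μc

variable (E : Type*) [NormedAddCommGroup E] [InnerProductSpace ℂ E] [CompleteSpace E]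
  [SecondCountableTopology E]

instance : IsBoundedSMul (E →L[ℂ] E) E :=
  IsBoundedSMul.of_norm_smul_le fun r x => r.le_opNorm x

/-- `L²_E(𝕋)`, the Bochner space of square integrable `E`-valued functions. -/
abbrev L2v := Lp E 2 μc

variable {E}

theorem integrable_fourier_smul (f : L2v E) (n : ℤ) :
    Integrable (fun t : 𝕋c => fourier n t • (f : 𝕋c → E) t) μc := by
  have h1 : MemLp (f : 𝕋c → E) 1 μc :=
    (Lp.memLp f).mono_exponent (by norm_num)
  have h2 : MemLp (fun t : 𝕋c => (fourier n t : ℂ)) ∞ μc :=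
    memLp_top_of_bound ((fourier n).continuous.aestronglyMeasurable) 1
      (Filter.Eventually.of_forall fun x => by
        simp only [fourier_apply, Circle.norm_coe, le_refl])
  have h3 := h1.smul (r := 1) h2
  rw [memLp_one_iff_integrable] at h3
  exact h3.congr (Filter.Eventually.of_forall fun x => rfl)

theorem vFourierCoeff_lp_add (f g : L2v E) (n : ℤ) :
    vFourierCoeff (⇑(f + g)) n = vFourierCoeff (⇑f) n + vFourierCoeff (⇑g) n := by
  unfold vFourierCoeff
  rw [← integral_add (integrable_fourier_smul f (-n)) (integrable_fourier_smul g (-n))]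
  apply integral_congr_ae
  filter_upwards [Lp.coeFn_add f g] with x hx
  rw [hx]
  simp only [Pi.add_apply, smul_add]

theorem vFourierCoeff_lp_smul (c : ℂ) (f : L2v E) (n : ℤ) :
    vFourierCoeff (⇑(c • f)) n = c • vFourierCoeff (⇑f) n := by
  unfold vFourierCoeff
  rw [← integral_smul]
  apply integral_congr_ae
  filter_upwards [Lp.coeFn_smul c f] with x hx
  rw [hx]
  simp only [Pi.smul_apply]
  rw [smul_comm]

theorem vFourierCoeff_lp_zero (n : ℤ) : vFourierCoeff (⇑(0 : L2v E)) n = 0 := by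
  unfold vFourierCoeff
  have h : (fun t : 𝕋c => fourier (-n) t • (⇑(0 : L2v E)) t) =ᵐ[μc] (fun _ => (0 : E)) := by
    filter_upwards [Lp.coeFn_zero E 2 μc] with x hx
    simp [hx]
  rw [integral_congr_ae h, integral_zero]

variable (E) in
/-- The `E`-valued Hardy space `H²_E(𝕋)`: members of `L²_E(𝕋)` all of whose Fourier
coefficients of negative index vanish. -/
def HardyV : Submodule ℂ (L2v E) where
  carrier := {f | ∀ n : ℤ, n < 0 → vFourierCoeff (⇑f) n = 0}
  add_mem' := by
    intro f g hf hg n hn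
    rw [vFourierCoeff_lp_add, hf n hn, hg n hn, add_zero]
  zero_mem' := fun n _ => vFourierCoeff_lp_zero n
  smul_mem' := by
    intro c f hf n hn
    rw [vFourierCoeff_lp_smul, hf n hn, smul_zero]

theorem norm_vFourierCoeff_le (f : L2v E) (n : ℤ) : ‖vFourierCoeff (⇑f) n‖ ≤ ‖f‖ := by
  unfold vFourierCoeff
  have h1 : ‖∫ t, fourier (-n) t • (⇑f) t ∂μc‖ ≤ ∫ t, ‖fourier (-n) t • (⇑f) t‖ ∂μc :=
    norm_integral_le_integral_norm _
  have h2 : (∫ t, ‖fourier (-n) t • (⇑f) t‖ ∂μc) = ∫ t, ‖(⇑f) t‖ ∂μc := by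
    apply integral_congr_ae
    apply Filter.Eventually.of_forall
    intro x
    simp only [norm_smul, fourier_apply, Circle.norm_coe, one_mul]
  refine h1.trans (h2.le.trans ?_)
  have h3 : (∫ t, ‖(⇑f) t‖ ∂μc) = (eLpNorm (⇑f) 1 μc).toReal := by
    rw [integral_norm_eq_lintegral_enorm (Lp.aestronglyMeasurable f),
      eLpNorm_one_eq_lintegral_enorm]
  rw [h3, Lp.norm_def]
  apply ENNReal.toReal_mono (Lp.eLpNorm_ne_top f)
  exact eLpNorm_le_eLpNorm_of_exponent_le (by norm_num) (Lp.aestronglyMeasurable f)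

theorem continuous_fourierCoeff (n : ℤ) :
    Continuous fun f : L2v E => vFourierCoeff (⇑f) n := by
  have hL : LipschitzWith 1 (fun f : L2v E => vFourierCoeff (⇑f) n) := by
    apply LipschitzWith.of_dist_le_mul
    intro f g
    rw [dist_eq_norm, dist_eq_norm]
    have hsub : vFourierCoeff (⇑(f - g)) n = vFourierCoeff (⇑f) n - vFourierCoeff (⇑g) n := by
      have h1 : f - g = f + (-1 : ℂ) • g := by rw [neg_one_smul, sub_eq_add_neg]
      rw [h1, vFourierCoeff_lp_add, vFourierCoeff_lp_smul, neg_one_smul, sub_eq_add_neg]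
    rw [← hsub]
    simpa using norm_vFourierCoeff_le (f - g) n
  exact hL.continuous

theorem isClosed_HardyV : IsClosed ((HardyV E : Submodule ℂ (L2v E)) : Set (L2v E)) := by
  have h : ((HardyV E : Submodule ℂ (L2v E)) : Set (L2v E)) =
      ⋂ (n : ℤ) (_ : n < 0), ((fun f : L2v E => vFourierCoeff (⇑f) n) ⁻¹' {0}) := by
    ext f
    simp only [Set.mem_iInter, Set.mem_preimage, Set.mem_singleton_iff, SetLike.mem_coe]
    exact ⟨fun hf n hn => hf n hn, fun hf n hn => hf n hn⟩
  rw [h]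
  exact isClosed_iInter fun n => isClosed_iInter fun _ =>
    isClosed_singleton.preimage (continuous_fourierCoeff n)

instance : CompleteSpace (HardyV E) := (isClosed_HardyV (E := E)).completeSpace_coe

/-- Underlying function of the multiplication operator with operator-valued symbol. -/
def MopFunV (Φ : 𝕋c → (E →L[ℂ] E)) (hΦ : MemLp Φ ∞ μc) (f : L2v E) : L2v E :=
  ((Lp.memLp f).smul (r := 2) hΦ).toLp (Φ • ⇑f)

theorem MopFunV_coeFn (Φ : 𝕋c → (E →L[ℂ] E)) (hΦ : MemLp Φ ∞ μc) (f : L2v E) :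
    ⇑(MopFunV Φ hΦ f) =ᵐ[μc] Φ • ⇑f := MemLp.coeFn_toLp _

theorem MopFunV_add (Φ : 𝕋c → (E →L[ℂ] E)) (hΦ : MemLp Φ ∞ μc) (f g : L2v E) :
    MopFunV Φ hΦ (f + g) = MopFunV Φ hΦ f + MopFunV Φ hΦ g := by
  apply Lp.ext
  filter_upwards [MopFunV_coeFn Φ hΦ (f + g), MopFunV_coeFn Φ hΦ f, MopFunV_coeFn Φ hΦ g,
    Lp.coeFn_add f g, Lp.coeFn_add (MopFunV Φ hΦ f) (MopFunV Φ hΦ g)] with x h1 h2 h3 h4 h5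
  simp only [h1, h5, Pi.add_apply, h2, h3, Pi.smul_apply', h4, smul_add]

theorem MopFunV_smul (Φ : 𝕋c → (E →L[ℂ] E)) (hΦ : MemLp Φ ∞ μc) (c : ℂ) (f : L2v E) :
    MopFunV Φ hΦ (c • f) = c • MopFunV Φ hΦ f := by
  apply Lp.ext
  filter_upwards [MopFunV_coeFn Φ hΦ (c • f), MopFunV_coeFn Φ hΦ f,
    Lp.coeFn_smul c f, Lp.coeFn_smul c (MopFunV Φ hΦ f)] with x h1 h2 h3 h4
  simp only [h1, h4, Pi.smul_apply', Pi.smul_apply, h2, h3]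
  rw [smul_comm]

theorem MopFunV_norm (Φ : 𝕋c → (E →L[ℂ] E)) (hΦ : MemLp Φ ∞ μc) (f : L2v E) :
    ‖MopFunV Φ hΦ f‖ ≤ (eLpNorm Φ ∞ μc).toReal * ‖f‖ := by
  have hrfl : MopFunV Φ hΦ f = ((Lp.memLp f).smul (r := 2) hΦ).toLp (Φ • ⇑f) := rfl
  rw [hrfl, Lp.norm_toLp (Φ • ⇑f) ((Lp.memLp f).smul (r := 2) hΦ), Lp.norm_def]
  have hb : eLpNorm (Φ • ⇑f) 2 μc ≤ eLpNorm Φ ∞ μc * eLpNorm (⇑f) 2 μc :=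
    eLpNorm_smul_le_eLpNorm_top_mul_eLpNorm 2 (Lp.aestronglyMeasurable f) Φ
  have hfin : eLpNorm Φ ∞ μc * eLpNorm (⇑f) 2 μc ≠ ∞ :=
    ENNReal.mul_ne_top hΦ.eLpNorm_ne_top (Lp.eLpNorm_ne_top f)
  calc (eLpNorm (Φ • ⇑f) 2 μc).toReal
      ≤ (eLpNorm Φ ∞ μc * eLpNorm (⇑f) 2 μc).toReal := ENNReal.toReal_mono hfin hb
    _ = (eLpNorm Φ ∞ μc).toReal * (eLpNorm (⇑f) 2 μc).toReal := ENNReal.toReal_mul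

/-- The multiplication (Laurent) operator `M_Φ` on `L²_E(𝕋)` with operator-valued symbol
`Φ ∈ L∞_{B(E)}(𝕋)`. -/
def MopV (Φ : 𝕋c → (E →L[ℂ] E)) (hΦ : MemLp Φ ∞ μc) : L2v E →L[ℂ] L2v E :=
  LinearMap.mkContinuous
    { toFun := MopFunV Φ hΦ
      map_add' := MopFunV_add Φ hΦ
      map_smul' := MopFunV_smul Φ hΦ }
    (eLpNorm Φ ∞ μc).toReal
    (fun f => MopFunV_norm Φ hΦ f)

/-- The conjugation operator `J : L²_E(𝕋) → L²_E(𝕋)`, `(Jf)(z) = f(z̄)`. -/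
def JopV : L2v E →L[ℂ] L2v E :=
  LinearMap.mkContinuous
    { toFun := fun f =>
        Lp.compMeasurePreserving (fun x : 𝕋c => -x) (Measure.measurePreserving_neg μc) f
      map_add' := by
        intro f g
        exact map_add (Lp.compMeasurePreserving _ (Measure.measurePreserving_neg μc)) f g
      map_smul' := by
        intro c f
        apply Lp.ext
        simp only [RingHom.id_apply]
        have hmp := Measure.measurePreserving_neg (μ := μc)
        have h1 := Lp.coeFn_compMeasurePreserving (μ := μc) (c • f) hmp
        have h2 := Lp.coeFn_compMeasurePreserving (μ := μc) f hmp
        have h3 : ⇑(c • f) ∘ (fun x : 𝕋c => -x) =ᵐ[μc] (c • ⇑f) ∘ (fun x : 𝕋c => -x) :=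
          hmp.quasiMeasurePreserving.ae_eq_comp (Lp.coeFn_smul c f)
        have h4 : (c • ⇑f) ∘ (fun x : 𝕋c => -x) = c • (⇑f ∘ fun x : 𝕋c => -x) := rfl
        have h5 : c • (⇑f ∘ fun x : 𝕋c => -x) =ᵐ[μc]
            c • ⇑(Lp.compMeasurePreserving (fun x : 𝕋c => -x) hmp f) :=
          h2.symm.const_smul c
        exact ((h1.trans h3).trans ((h4 ▸ h5 : _))).trans (Lp.coeFn_smul c _).symm }
    1
    (by
      intro f
      simp only [LinearMap.coe_mk, AddHom.coe_mk, one_mul]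
      exact le_of_eq (Lp.norm_compMeasurePreserving f _))

/-- The Toeplitz operator `T_Φ = P_{H²_E} M_Φ |_{H²_E}`. -/
def ToepV (Φ : 𝕋c → (E →L[ℂ] E)) (hΦ : MemLp Φ ∞ μc) : HardyV E →L[ℂ] HardyV E :=
  (HardyV E).orthogonalProjectionOnto.comp ((MopV Φ hΦ).comp (HardyV E).subtypeL)

/-- The Hankel operator `H_Φ = P_{H²_E} M_Φ J |_{H²_E}`. -/
def HankV (Φ : 𝕋c → (E →L[ℂ] E)) (hΦ : MemLp Φ ∞ μc) : HardyV E →L[ℂ] HardyV E :=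
  (HardyV E).orthogonalProjectionOnto.comp ((MopV Φ hΦ).comp (JopV.comp (HardyV E).subtypeL))

variable (E) in
/-- The symbol `z ⬝ I_E`. -/
def zSym : 𝕋c → (E →L[ℂ] E) := fun x => (fourier 1 x : ℂ) • (1 : E →L[ℂ] E)

theorem zSym_memℒp : MemLp (zSym E) ∞ μc := by
  have hc : Continuous (zSym E) := by
    have h1 : Continuous fun x : 𝕋c => (fourier 1 x : ℂ) := (fourier 1).continuous
    exact h1.smul continuous_const
  refine memLp_top_of_bound hc.aestronglyMeasurable 1
    (Filter.Eventually.of_forall fun x => ?_)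
  rw [zSym, norm_smul]
  simp only [fourier_apply, Circle.norm_coe, one_mul]
  exact ContinuousLinearMap.norm_id_le

variable (E) in
/-- The (vector-valued) unilateral shift `T_z`. -/
def TzV : HardyV E →L[ℂ] HardyV E := ToepV (zSym E) zSym_memℒp

variable (E) in
/-- `T_z^*`, the adjoint of the unilateral shift. -/
def TzStarV : HardyV E →L[ℂ] HardyV E := ContinuousLinearMap.adjoint (TzV E)

variable (E) in
/-- `A` is a Toeplitz + Hankel operator: `A = T_Φ + H_Ψ` for some
`Φ, Ψ ∈ L∞_{B(E)}(𝕋)`. -/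
def IsToepPlusHankV (A : HardyV E →L[ℂ] HardyV E) : Prop :=
  ∃ (Φ Ψ : 𝕋c → (E →L[ℂ] E)) (hΦ : MemLp Φ ∞ μc) (hΨ : MemLp Ψ ∞ μc),
    A = ToepV Φ hΦ + HankV Ψ hΨ

/-!
Write `Δ = Φ - Φ₁` and `Γ = Ψ - Ψ₁`, so that `T_Δ + H_Γ = 0`. Applying it to `zⁿ v` and reading
off the `m`-th Fourier coefficient (`m, n ≥ 0`) gives `Δ̂(m - n) + Γ̂(m + n) = 0`: the projection
onto `H²_E` does not change coefficients of nonnegative index, and `J (zⁿ v) = z⁻ⁿ v`. Hence `Δ̂`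
is `2`-periodic and `Γ̂(m) = -Δ̂(m)` for `m ≥ 0`.

The operators `Δ̂(k)` need not tend to `0` in norm, but for fixed `v, w ∈ E` the numbers
`⟪w, Δ̂(k) v⟫` are the Fourier coefficients of a scalar `L²` function, so they tend to `0` by
Parseval and, being periodic in `k`, vanish. Uniqueness of Fourier coefficients in `L²(𝕋)` and
the separability of `E` then give `Δ = 0` a.e., and with it `Γ̂(m) = 0` for `m ≥ 0`.
-/

open Filter Topology
open scoped InnerProductSpace

theorem _root_.Function.Periodic.eq_zero_of_tendsto_cofinite {X : Type*} [TopologicalSpace X]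
    [T2Space X] [Zero X] {a : ℤ → X} {c : ℤ} (hper : Function.Periodic a c) (hc : c ≠ 0)
    (hlim : Tendsto a cofinite (𝓝 0)) : a = 0 := by
  funext k
  have hinj : Function.Injective fun j : ℤ => k + j * c := fun i j hij => by
    simpa [hc] using hij
  have hconst : (a ∘ fun j : ℤ => k + j * c) = fun _ => a k := funext fun j => hper.int_mul j k
  have hlim' := hlim.comp hinj.tendsto_cofinite
  rw [hconst] at hlim'
  exact tendsto_nhds_unique tendsto_const_nhds hlim'

theorem periodic_two_of_sub_add_eq_zero {G : Type*} [AddGroup G] {a b : ℤ → G}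
    (h : ∀ m n : ℤ, 0 ≤ m → 0 ≤ n → a (m - n) + b (m + n) = 0) : Function.Periodic a 2 := by
  have hab : ∀ m n : ℤ, 0 ≤ m → 0 ≤ n → a (m - n) = -b (m + n) := fun m n hm hn =>
    eq_neg_of_add_eq_zero_left (h m n hm hn)
  -- `a k` and `a (k + 2)` both equal `-b (k + 2)` if `0 ≤ k`, and both equal `-b (-k)` otherwise.
  intro k
  rcases le_or_gt 0 k with hk | hk
  · have h₁ := hab (k + 2) 0 (by omega) le_rfl
    have h₂ := hab (k + 1) 1 (by omega) zero_le_one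
    rw [sub_zero, add_zero] at h₁
    rw [add_sub_cancel_right, add_assoc, one_add_one_eq_two] at h₂
    rw [h₁, h₂]
  · have h₁ := hab 1 (-k - 1) zero_le_one (by omega)
    have h₂ := hab 0 (-k) le_rfl (by omega)
    rw [show (1 : ℤ) - (-k - 1) = k + 2 by ring, show (1 : ℤ) + (-k - 1) = -k by ring] at h₁
    rw [zero_sub, neg_neg, zero_add] at h₂
    rw [h₁, h₂]

theorem _root_.MeasureTheory.ae_eq_zero_of_forall_apply {α 𝕜 V W : Type*} [MeasurableSpace α]
    {μ : Measure α} [RCLike 𝕜] [NormedAddCommGroup V] [NormedSpace 𝕜 V]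
    [TopologicalSpace.SeparableSpace V] [NormedAddCommGroup W] [NormedSpace 𝕜 W]
    {Θ : α → V →L[𝕜] W} (h : ∀ v, (fun t => Θ t v) =ᵐ[μ] 0) : Θ =ᵐ[μ] 0 := by
  have hdense : ∀ᵐ t ∂μ, ∀ n, Θ t (TopologicalSpace.denseSeq V n) = 0 :=
    ae_all_iff.mpr fun n => h _
  filter_upwards [hdense] with t ht
  exact DFunLike.coe_injective <| (TopologicalSpace.denseRange_denseSeq V).equalizer
    (Θ t).continuous continuous_zero (funext ht)

section ScalarFourier

variable {T : ℝ} [Fact (0 < T)] {g : AddCircle T → ℂ}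

theorem tendsto_fourierCoeff_cofinite (hg : MemLp g 2 haarAddCircle) :
    Tendsto (fourierCoeff g) cofinite (𝓝 0) := by
  rw [← fourierCoeff_congr_ae hg.coeFn_toLp, tendsto_zero_iff_norm_tendsto_zero]
  simpa using (hasSum_sq_fourierCoeff (hg.toLp g)).summable.tendsto_cofinite_zero.sqrt

theorem ae_eq_zero_of_fourierCoeff_eq_zero (hg : MemLp g 2 haarAddCircle)
    (h : fourierCoeff g = 0) : g =ᵐ[haarAddCircle] 0 := by
  have hrepr : fourierBasis.repr (hg.toLp g) = 0 := by
    ext i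
    rw [fourierBasis_repr, fourierCoeff_congr_ae hg.coeFn_toLp, h]
    rfl
  have hzero : hg.toLp g = 0 := fourierBasis.repr.injective (by rw [hrepr, map_zero])
  exact hg.coeFn_toLp.symm.trans (hzero ▸ Lp.coeFn_zero ℂ 2 haarAddCircle)

end ScalarFourier

section VectorFourier

theorem vFourierCoeff_eq_fourierCoeff {F : Type*} [NormedAddCommGroup F] [NormedSpace ℂ F]
    (f : 𝕋c → F) : vFourierCoeff f = fourierCoeff f := rfl

theorem vFourierCoeff_zero {F : Type*} [NormedAddCommGroup F] [NormedSpace ℂ F] (n : ℤ) :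
    vFourierCoeff (0 : 𝕋c → F) n = 0 := by
  simp [vFourierCoeff]

theorem vFourierCoeff_sub {F : Type*} [NormedAddCommGroup F] [NormedSpace ℂ F]
    {f g : 𝕋c → F} (hf : Integrable f μc) (hg : Integrable g μc) (n : ℤ) :
    vFourierCoeff (fun t => f t - g t) n = vFourierCoeff f n - vFourierCoeff g n := by
  simp_rw [vFourierCoeff, smul_sub]
  exact integral_sub (hf.fourier_smul _) (hg.fourier_smul _)

theorem vFourierCoeff_apply {V W : Type*} [NormedAddCommGroup V] [NormedSpace ℂ V]
    [NormedAddCommGroup W] [NormedSpace ℂ W] {Θ : 𝕋c → V →L[ℂ] W} (hΘ : Integrable Θ μc)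
    (n : ℤ) (v : V) : vFourierCoeff Θ n v = vFourierCoeff (fun t => Θ t v) n :=
  ContinuousLinearMap.integral_apply (hΘ.fourier_smul _) v

theorem memLp_two_apply {V W : Type*} [NormedAddCommGroup V] [NormedSpace ℂ V]
    [NormedAddCommGroup W] [NormedSpace ℂ W] {Θ : 𝕋c → V →L[ℂ] W} (hΘ : MemLp Θ ∞ μc) (v : V) :
    MemLp (fun t => Θ t v) 2 μc :=
  ((ContinuousLinearMap.apply ℂ W v).comp_memLp' hΘ).mono_exponent le_top

variable {H : Type*} [NormedAddCommGroup H] [InnerProductSpace ℂ H] [CompleteSpace H]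

theorem inner_vFourierCoeff {f : 𝕋c → H} (hf : Integrable f μc) (w : H) (n : ℤ) :
    ⟪w, vFourierCoeff f n⟫_ℂ = fourierCoeff (fun t => ⟪w, f t⟫_ℂ) n := by
  simp_rw [vFourierCoeff, fourierCoeff, ← integral_inner (hf.fourier_smul _), inner_smul_right,
    smul_eq_mul]

theorem vFourierCoeff_eq_zero_of_periodic {f : 𝕋c → H} (hf : MemLp f 2 μc) {c : ℤ} (hc : c ≠ 0)
    (hper : Function.Periodic (vFourierCoeff f) c) : vFourierCoeff f = 0 := by
  funext n
  refine ext_inner_left ℂ fun w => ?_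
  have hcoeff : fourierCoeff (fun t => ⟪w, f t⟫_ℂ) = fun n => ⟪w, vFourierCoeff f n⟫_ℂ :=
    funext fun n => (inner_vFourierCoeff (hf.integrable one_le_two) w n).symm
  have hzero : fourierCoeff (fun t => ⟪w, f t⟫_ℂ) = 0 := by
    refine Function.Periodic.eq_zero_of_tendsto_cofinite (c := c) ?_ hc
      (tendsto_fourierCoeff_cofinite (hf.const_inner w))
    rw [hcoeff]
    exact fun n => by simp only [hper n]
  simpa [hcoeff] using congrFun hzero n

theorem ae_eq_zero_of_vFourierCoeff_eq_zero [SecondCountableTopology H] {f : 𝕋c → H}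
    (hf : MemLp f 2 μc) (h : vFourierCoeff f = 0) : f =ᵐ[μc] 0 := by
  refine ae_eq_zero_of_forall_inner (𝕜 := ℂ) fun w => ae_eq_zero_of_fourierCoeff_eq_zero
    (hf.const_inner w) (funext fun n => ?_)
  rw [← inner_vFourierCoeff (hf.integrable one_le_two), h, Pi.zero_apply, inner_zero_right,
    Pi.zero_apply]

theorem ae_eq_zero_of_vFourierCoeff_periodic [SecondCountableTopology H]
    {Θ : 𝕋c → H →L[ℂ] H} (hΘ : MemLp Θ ∞ μc) {c : ℤ} (hc : c ≠ 0)
    (hper : Function.Periodic (vFourierCoeff Θ) c) : Θ =ᵐ[μc] 0 := by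
  refine ae_eq_zero_of_forall_apply fun v => ae_eq_zero_of_vFourierCoeff_eq_zero
    (memLp_two_apply hΘ v) (vFourierCoeff_eq_zero_of_periodic (memLp_two_apply hΘ v) hc ?_)
  intro n
  simp only [← vFourierCoeff_apply (hΘ.integrable le_top), hper n]

end VectorFourier

theorem memLp_fourier_smul {V : Type*} [NormedAddCommGroup V] [NormedSpace ℂ V] (n : ℤ) (v : V) :
    MemLp (fun t : 𝕋c => fourier n t • v) 2 μc :=
  ContinuousMap.memLp (p := 2) (μ := μc) ℂ ⟨fun t => fourier n t • v, by fun_prop⟩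

def fourierSmulLp (n : ℤ) (v : E) : L2v E := (memLp_fourier_smul n v).toLp _

theorem coeFn_fourierSmulLp (n : ℤ) (v : E) :
    ⇑(fourierSmulLp n v) =ᵐ[μc] fun t => fourier n t • v :=
  MemLp.coeFn_toLp _

theorem vFourierCoeff_fourierSmulLp (n m : ℤ) (v : E) :
    vFourierCoeff (fourierSmulLp n v) m = (Pi.single n v : ℤ → E) m := by
  have hcoeff :
      vFourierCoeff (fourierSmulLp n v) m = fourierCoeff (fourier n : 𝕋c → ℂ) m • v := by
    rw [vFourierCoeff_eq_fourierCoeff, fourierCoeff_congr_ae (coeFn_fourierSmulLp n v),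
      fourierCoeff, fourierCoeff, ← integral_smul_const]
    simp_rw [smul_smul, smul_eq_mul]
  rw [hcoeff, fourierCoeff_fourier]
  rcases eq_or_ne m n with rfl | hmn
  · simp
  · simp [hmn]

theorem fourierSmulLp_mem_hardyV {n : ℤ} (hn : 0 ≤ n) (v : E) : fourierSmulLp n v ∈ HardyV E :=
  fun m hm => by rw [vFourierCoeff_fourierSmulLp, Pi.single_eq_of_ne (by omega)]

def fourierSmulHardy (n : ℤ) (hn : 0 ≤ n) (v : E) : HardyV E :=
  ⟨fourierSmulLp n v, fourierSmulLp_mem_hardyV hn v⟩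

theorem inner_fourierSmulLp (m : ℤ) (v : E) (g : L2v E) :
    ⟪fourierSmulLp m v, g⟫_ℂ = ⟪v, vFourierCoeff g m⟫_ℂ := by
  rw [vFourierCoeff, ← integral_inner (integrable_fourier_smul g (-m)) v, L2.inner_def]
  refine integral_congr_ae ?_
  filter_upwards [coeFn_fourierSmulLp m v] with t ht
  rw [ht, inner_smul_left, inner_smul_right, ← fourier_neg]

theorem vFourierCoeff_eq_zero_of_mem_orthogonal_hardyV {g : L2v E} (hg : g ∈ (HardyV E)ᗮ)
    {m : ℤ} (hm : 0 ≤ m) : vFourierCoeff g m = 0 :=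
  ext_inner_left ℂ fun v => by
    rw [← inner_fourierSmulLp, inner_zero_right,
      Submodule.inner_right_of_mem_orthogonal (fourierSmulLp_mem_hardyV hm v) hg]

theorem vFourierCoeff_orthogonalProjection_hardyV (g : L2v E) {m : ℤ} (hm : 0 ≤ m) :
    vFourierCoeff (((HardyV E).orthogonalProjectionOnto g : HardyV E) : L2v E) m =
      vFourierCoeff g m := by
  have horth : g - ((HardyV E).orthogonalProjectionOnto g : L2v E) ∈ (HardyV E)ᗮ :=
    (HardyV E).sub_starProjection_mem_orthogonal g
  have hsplit := vFourierCoeff_lp_add ((HardyV E).orthogonalProjectionOnto g : L2v E)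
    (g - (HardyV E).orthogonalProjectionOnto g) m
  rwa [add_sub_cancel, vFourierCoeff_eq_zero_of_mem_orthogonal_hardyV horth hm, add_zero,
    eq_comm] at hsplit

theorem vFourierCoeff_mopV_fourierSmulLp {Θ : 𝕋c → E →L[ℂ] E} (hΘ : MemLp Θ ∞ μc)
    (n m : ℤ) (v : E) :
    vFourierCoeff (MopV Θ hΘ (fourierSmulLp n v)) m = vFourierCoeff Θ (m - n) v := by
  rw [vFourierCoeff_apply (hΘ.integrable le_top)]
  refine integral_congr_ae ?_
  filter_upwards [MopFunV_coeFn Θ hΘ (fourierSmulLp n v), coeFn_fourierSmulLp n v] with t h1 h2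
  change fourier (-m) t • MopFunV Θ hΘ (fourierSmulLp n v) t = _
  rw [h1, Pi.smul_apply', h2, ContinuousLinearMap.smul_def, map_smul, smul_smul, ← fourier_add,
    neg_sub, sub_eq_neg_add]

theorem jopV_fourierSmulLp (n : ℤ) (v : E) : JopV (fourierSmulLp n v) = fourierSmulLp (-n) v := by
  have hneg := Measure.measurePreserving_neg (μ := μc)
  refine Lp.ext ?_
  filter_upwards [Lp.coeFn_compMeasurePreserving (fourierSmulLp n v) hneg,
    hneg.quasiMeasurePreserving.ae_eq_comp (coeFn_fourierSmulLp n v),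
    coeFn_fourierSmulLp (-n) v] with t h1 h2 h3
  change Lp.compMeasurePreserving _ hneg (fourierSmulLp n v) t = _
  rw [h1, h2, h3]
  simp only [Function.comp_apply, fourier_apply, smul_neg, neg_smul]

theorem vFourierCoeff_toepV {Φ : 𝕋c → E →L[ℂ] E} (hΦ : MemLp Φ ∞ μc) {n m : ℤ} (hn : 0 ≤ n)
    (hm : 0 ≤ m) (v : E) :
    vFourierCoeff (ToepV Φ hΦ (fourierSmulHardy n hn v) : L2v E) m =
      vFourierCoeff Φ (m - n) v :=
  (vFourierCoeff_orthogonalProjection_hardyV _ hm).trans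
    (vFourierCoeff_mopV_fourierSmulLp hΦ n m v)

theorem vFourierCoeff_hankV {Ψ : 𝕋c → E →L[ℂ] E} (hΨ : MemLp Ψ ∞ μc) {n m : ℤ} (hn : 0 ≤ n)
    (hm : 0 ≤ m) (v : E) :
    vFourierCoeff (HankV Ψ hΨ (fourierSmulHardy n hn v) : L2v E) m =
      vFourierCoeff Ψ (m + n) v := by
  change vFourierCoeff ((HardyV E).orthogonalProjectionOnto
    (MopV Ψ hΨ (JopV (fourierSmulLp n v))) : L2v E) m = _
  rw [jopV_fourierSmulLp, vFourierCoeff_orthogonalProjection_hardyV _ hm,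
    vFourierCoeff_mopV_fourierSmulLp, sub_neg_eq_add]

theorem vFourierCoeff_add_eq_of_toepV_add_hankV_eq {Φ Φ₁ Ψ Ψ₁ : 𝕋c → E →L[ℂ] E}
    {hΦ : MemLp Φ ∞ μc} {hΦ₁ : MemLp Φ₁ ∞ μc} {hΨ : MemLp Ψ ∞ μc} {hΨ₁ : MemLp Ψ₁ ∞ μc}
    (h : ToepV Φ hΦ + HankV Ψ hΨ = ToepV Φ₁ hΦ₁ + HankV Ψ₁ hΨ₁) {m n : ℤ} (hm : 0 ≤ m)
    (hn : 0 ≤ n) :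
    vFourierCoeff Φ (m - n) + vFourierCoeff Ψ (m + n) =
      vFourierCoeff Φ₁ (m - n) + vFourierCoeff Ψ₁ (m + n) := by
  ext v
  have hcoeff := congrArg
    (fun A : HardyV E →L[ℂ] HardyV E => vFourierCoeff (A (fourierSmulHardy n hn v) : L2v E) m) h
  simpa only [add_apply, Submodule.coe_add, vFourierCoeff_lp_add,
    vFourierCoeff_toepV _ hn hm, vFourierCoeff_hankV _ hn hm] using hcoeff

/-- **Theorem (uniqueness of symbols of Toeplitz + Hankel operators).** If
`T_Φ + H_Ψ = T_{Φ₁} + H_{Ψ₁}` on `H²_E(𝕋)`, then `Φ = Φ₁` a.e. and all Fourier coefficients of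
`Ψ - Ψ₁` of nonnegative index vanish (that is, `Ψ - Ψ₁ ∈ conj(z H∞_{B(E)}(𝔻))`). -/
theorem toeplitz_plus_hankel_symbols_unique
    (Φ Φ₁ Ψ Ψ₁ : 𝕋c → (E →L[ℂ] E))
    (hΦ : MemLp Φ ∞ μc) (hΦ₁ : MemLp Φ₁ ∞ μc) (hΨ : MemLp Ψ ∞ μc) (hΨ₁ : MemLp Ψ₁ ∞ μc)
    (h : ToepV Φ hΦ + HankV Ψ hΨ = ToepV Φ₁ hΦ₁ + HankV Ψ₁ hΨ₁) :
    Φ =ᵐ[μc] Φ₁ ∧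
      ∀ n : ℤ, 0 ≤ n → vFourierCoeff (fun x : 𝕋c => Ψ x - Ψ₁ x) n = 0 := by
  have hrel : ∀ m n : ℤ, 0 ≤ m → 0 ≤ n → vFourierCoeff (fun x => Φ x - Φ₁ x) (m - n) +
      vFourierCoeff (fun x => Ψ x - Ψ₁ x) (m + n) = 0 := fun m n hm hn => by
    rw [vFourierCoeff_sub (hΦ.integrable le_top) (hΦ₁.integrable le_top),
      vFourierCoeff_sub (hΨ.integrable le_top) (hΨ₁.integrable le_top),
      sub_add_sub_comm, sub_eq_zero]
    exact vFourierCoeff_add_eq_of_toepV_add_hankV_eq h hm hn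
  have hΔ : (fun x => Φ x - Φ₁ x) =ᵐ[μc] 0 := ae_eq_zero_of_vFourierCoeff_periodic
    (hΦ.sub hΦ₁) two_ne_zero (periodic_two_of_sub_add_eq_zero hrel)
  refine ⟨hΔ.mono fun x hx => sub_eq_zero.mp hx, fun n hn => ?_⟩
  have hrel₀ := hrel n 0 hn le_rfl
  rwa [sub_zero, add_zero, vFourierCoeff_eq_fourierCoeff, fourierCoeff_congr_ae hΔ,
    ← vFourierCoeff_eq_fourierCoeff, vFourierCoeff_zero, zero_add] at hrel₀

end PaperTHV
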